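/- If f is an equicontinuous homeomorphism of a compact metric space X, then the set of shadowable points of f equals X^deg, the set of points whose connected component is a singleton. -/

import Mathlib

/-! Equicontinuity keeps the orbits of nearby points uniformly close for all time. If `q ≠ p` lies
in the component of `p`, a fine chain from `p` to `q` inside that component yields a pseudo-orbit
that first follows the orbit of `p` and eventually the orbit of `q`; a shadowing orbit would be
close to both, so `p = q`. Conversely, if `{p}` is a component, `p` has a clopen neighbourhood `U`
inside a small ball, and `U` contains its closed `g`-neighbourhood for some `g > 0`. Pulling a fine
pseudo-orbit `ξ` back to `n ↦ f⁻ⁿ (ξ n)` gives a sequence with steps of length at most `g`, which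
therefore never leaves `U`; hence the orbit of `p` itself shadows `ξ`. -/

open Metric Set

/-- Natural iterates of a homeomorphism. -/
def hnpow {X : Type*} [TopologicalSpace X] (f : X ≃ₜ X) : ℕ → X ≃ₜ X
  | 0 => Homeomorph.refl X
  | n+1 => (hnpow f n).trans f

/-- Integer iterates `fⁿ`, `n ∈ ℤ`, of a homeomorphism. -/
def hpow {X : Type*} [TopologicalSpace X] (f : X ≃ₜ X) : ℤ → X ≃ₜ X
  | Int.ofNat n => hnpow f n
  | Int.negSucc n => hnpow f.symm (n+1)

variable {X : Type*} [MetricSpace X]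

/-- `ξ` is a `δ`-pseudo-orbit of `f`. -/
def IsPseudoOrbit (f : X ≃ₜ X) (δ : ℝ) (ξ : ℤ → X) : Prop :=
  ∀ n : ℤ, dist (f (ξ n)) (ξ (n+1)) ≤ δ

/-- `ξ` is `ε`-shadowed by the orbit of `y`. -/
def ShadowedBy (f : X ≃ₜ X) (ε : ℝ) (y : X) (ξ : ℤ → X) : Prop :=
  ∀ n : ℤ, dist (hpow f n y) (ξ n) ≤ ε

/-- `x` is a shadowable point of `f`. -/
def ShadowablePoint (f : X ≃ₜ X) (x : X) : Prop :=
  ∀ ε > 0, ∃ δ > 0, ∀ ξ : ℤ → X, IsPseudoOrbit f δ ξ → ξ 0 = x →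
    ∃ y, ShadowedBy f ε y ξ

/-- `f` has the pseudo-orbit tracing property. -/
def POTP (f : X ≃ₜ X) : Prop :=
  ∀ ε > 0, ∃ δ > 0, ∀ ξ : ℤ → X, IsPseudoOrbit f δ ξ → ∃ y, ShadowedBy f ε y ξ

/-- `x` is a nonwandering point of `f`. -/
def NonWandering (f : X ≃ₜ X) (x : X) : Prop :=
  ∀ U ∈ nhds x, ∃ k : ℕ, 0 < k ∧ ((hpow f (k : ℤ)) '' U ∩ U).Nonempty

/-- `x` is a chain recurrent point of `f`. -/
def ChainRecurrent (f : X ≃ₜ X) (x : X) : Prop :=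
  ∀ ρ > 0, ∃ n : ℕ, 0 < n ∧ ∃ c : ℕ → X, c 0 = x ∧ c n = x ∧
    ∀ i < n, dist (f (c i)) (c (i+1)) ≤ ρ

/-- `f` is distal: `inf_{n∈ℤ} d(fⁿ x, fⁿ y) > 0` for all distinct `x, y`. -/
def Distal (f : X ≃ₜ X) : Prop :=
  ∀ x y : X, x ≠ y → ∃ c > 0, ∀ n : ℤ, c ≤ dist (hpow f n x) (hpow f n y)

/-- `f` is minimal: every full orbit is dense. -/
def MinimalHomeo (f : X ≃ₜ X) : Prop :=
  ∀ x : X, Dense (Set.range fun n : ℤ => hpow f n x)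

/-- `f` is equicontinuous (uniformly, over all integer iterates). -/
def EquicontinuousHomeo (f : X ≃ₜ X) : Prop :=
  ∀ α > 0, ∃ β > 0, ∀ x y : X, dist x y ≤ β → ∀ n : ℤ, dist (hpow f n x) (hpow f n y) ≤ α

section iterates

variable {X : Type*} [TopologicalSpace X] (f : X ≃ₜ X)

lemma hnpow_eq_pow (n : ℕ) : hnpow f n = f ^ n := by
  induction n with
  | zero => rfl
  | succ n ih => rw [pow_succ', ← ih]; rfl

lemma hpow_eq_zpow (n : ℤ) : hpow f n = f ^ n := by
  cases n with
  | ofNat n => exact hnpow_eq_pow f n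
  | negSucc n => rw [zpow_negSucc, ← inv_pow]; exact hnpow_eq_pow f⁻¹ (n + 1)

lemma hpow_add_apply (m n : ℤ) (x : X) : hpow f (m + n) x = hpow f m (hpow f n x) := by
  simp only [hpow_eq_zpow, zpow_add, Homeomorph.mul_apply]

lemma hpow_zero_apply (x : X) : hpow f 0 x = x := rfl

lemma hpow_succ_apply (n : ℤ) (x : X) : hpow f (n + 1) x = f (hpow f n x) := by
  rw [add_comm, hpow_add_apply]; rfl

lemma hpow_neg_apply_hpow (n : ℤ) (x : X) : hpow f (-n) (hpow f n x) = x := by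
  rw [← hpow_add_apply, neg_add_cancel, hpow_zero_apply]

lemma hpow_apply_hpow_neg (n : ℤ) (x : X) : hpow f n (hpow f (-n) x) = x := by
  simpa using hpow_neg_apply_hpow f (-n) x

end iterates

lemma exists_isClopen_subset_of_connectedComponent_subset {X : Type*} [TopologicalSpace X]
    [T2Space X] [CompactSpace X] {x : X} {U : Set X} (hU : IsOpen U)
    (hxU : connectedComponent x ⊆ U) : ∃ V, IsClopen V ∧ x ∈ V ∧ V ⊆ U := by
  let N := {s : Set X // IsClopen s ∧ x ∈ s}
  have : Nonempty N := ⟨⟨univ, isClopen_univ, mem_univ x⟩⟩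
  have hdir : Directed (· ⊇ ·) fun s : N => s.val := by
    rintro ⟨s, hs, hxs⟩ ⟨t, ht, hxt⟩
    exact ⟨⟨s ∩ t, hs.inter ht, hxs, hxt⟩, inter_subset_left, inter_subset_right⟩
  obtain ⟨⟨V, hV, hxV⟩, hVU⟩ := exists_subset_nhds_of_compactSpace hdir
    (fun s => s.2.1.isClosed) (U := U) fun y hy =>
      hU.mem_nhds (hxU (by rwa [connectedComponent_eq_iInter_isClopen]))
  exact ⟨V, hV, hxV, hVU⟩

lemma IsPreconnected.reflTransGen_dist_le {X : Type*} [PseudoMetricSpace X] {s : Set X}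
    (hs : IsPreconnected s) {r : ℝ} (hr : 0 < r) {x y : X} (hx : x ∈ s) (hy : y ∈ s) :
    Relation.ReflTransGen (fun a b => dist a b ≤ r) x y := by
  refine hs.induction₂' _ (fun z _ => ?_) (fun _ _ _ _ _ _ => Relation.ReflTransGen.trans) hx hy
  filter_upwards [nhdsWithin_le_nhds (closedBall_mem_nhds z hr)] with w hw
  exact ⟨.single (by rwa [dist_comm]), .single hw⟩

lemma mem_of_cthickening_subset_of_dist_succ_le {X : Type*} [PseudoMetricSpace X] {U : Set X}
    {g : ℝ} (hU : cthickening g U ⊆ U) {u : ℤ → X} (hu : ∀ n, dist (u (n + 1)) (u n) ≤ g)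
    (hu₀ : u 0 ∈ U) (n : ℤ) : u n ∈ U := by
  induction n using Int.induction_on with
  | zero => exact hu₀
  | succ k ih => exact hU (mem_cthickening_of_dist_le _ _ g U ih (hu k))
  | pred k ih =>
    refine hU (mem_cthickening_of_dist_le _ _ g U ih ?_)
    simpa [dist_comm] using hu (-k - 1)

variable {f : X ≃ₜ X}

lemma exists_pseudoOrbit_of_reflTransGen {r δ : ℝ} (hδ : 0 ≤ δ)
    (hf : ∀ a b, dist a b ≤ r → ∀ n : ℕ, dist (hpow f n a) (hpow f n b) ≤ δ) {p q : X}
    (hpq : Relation.ReflTransGen (fun a b => dist a b ≤ r) p q) :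
    ∃ ξ, IsPseudoOrbit f δ ξ ∧ ξ 0 = p ∧ ∃ m : ℕ, ξ m = hpow f m q := by
  induction hpq with
  | refl =>
    refine ⟨fun n => hpow f n p, fun n => ?_, rfl, 0, rfl⟩
    simp [hpow_succ_apply, hδ]
  | @tail b c _ hbc ih =>
    obtain ⟨ξ, hξ, hξ₀, m, hξm⟩ := ih
    refine ⟨fun n => if n ≤ m then ξ n else hpow f n c, fun n => ?_, by simp [hξ₀], m + 1, ?_⟩
    · rcases lt_trichotomy n m with hn | rfl | hn
      · simpa [hn.le, Int.add_one_le_iff.2 hn] using hξ n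
      · simpa [hξm, ← hpow_succ_apply] using hf _ _ hbc (m + 1)
      · simpa [hn.not_ge, (hn.trans (lt_add_one n)).not_ge, hpow_succ_apply] using hδ
    · simp

lemma IsPseudoOrbit.dist_hpow_neg_succ_le {δ α : ℝ}
    (hf : ∀ a b, dist a b ≤ δ → ∀ n : ℤ, dist (hpow f n a) (hpow f n b) ≤ α) {ξ : ℤ → X}
    (hξ : IsPseudoOrbit f δ ξ) (n : ℤ) :
    dist (hpow f (-(n + 1)) (ξ (n + 1))) (hpow f (-n) (ξ n)) ≤ α := by
  have hpull : hpow f (-n) (ξ n) = hpow f (-(n + 1)) (f (ξ n)) := by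
    rw [show f (ξ n) = hpow f 1 (ξ n) from rfl, ← hpow_add_apply]; ring_nf
  rw [hpull, dist_comm]
  exact hf _ _ (hξ n) _

theorem ShadowablePoint.connectedComponent_eq_singleton (hf : EquicontinuousHomeo f) {p : X}
    (hp : ShadowablePoint f p) : connectedComponent p = {p} := by
  refine eq_singleton_iff_unique_mem.2 ⟨mem_connectedComponent, fun q hq => ?_⟩
  refine eq_of_forall_dist_le fun ε hε => ?_
  obtain ⟨β, hβ, hfβ⟩ := hf (ε / 2) (by positivity)
  obtain ⟨δ, hδ, hshadow⟩ := hp (min (ε / 2) β) (lt_min (by positivity) hβ)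
  obtain ⟨r, hr, hfr⟩ := hf δ hδ
  obtain ⟨ξ, hξ, hξ₀, m, hξm⟩ := exists_pseudoOrbit_of_reflTransGen hδ.le
    (fun a b hab n => hfr a b hab n)
    (isPreconnected_connectedComponent.reflTransGen_dist_le hr mem_connectedComponent hq)
  obtain ⟨y, hy⟩ := hshadow ξ hξ hξ₀
  have hyp : dist y p ≤ ε / 2 := by
    simpa [hpow_zero_apply, hξ₀] using (hy 0).trans (min_le_left _ _)
  have hyq : dist y q ≤ ε / 2 := by
    have hym : dist (hpow f m y) (hpow f m q) ≤ β := by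
      simpa [hξm] using (hy m).trans (min_le_right _ _)
    simpa [hpow_neg_apply_hpow] using hfβ _ _ hym (-m)
  calc dist q p ≤ dist y q + dist y p := dist_triangle_left _ _ _
    _ ≤ ε := by linarith

theorem ShadowablePoint.of_connectedComponent_eq_singleton [CompactSpace X]
    (hf : EquicontinuousHomeo f) {p : X} (hp : connectedComponent p = {p}) :
    ShadowablePoint f p := by
  intro ε hε
  obtain ⟨β, hβ, hfβ⟩ := hf ε hε
  obtain ⟨U, hU, hpU, hUβ⟩ := exists_isClopen_subset_of_connectedComponent_subset isOpen_ball
    (hp.subset.trans (singleton_subset_iff.2 (mem_ball_self hβ)))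
  obtain ⟨g, hg, hgU⟩ := hU.isClosed.isCompact.exists_cthickening_subset_open hU.isOpen subset_rfl
  obtain ⟨δ, hδ, hfδ⟩ := hf g hg
  refine ⟨δ, hδ, fun ξ hξ hξ₀ => ⟨p, fun n => ?_⟩⟩
  have hpull : hpow f (-n) (ξ n) ∈ U :=
    mem_of_cthickening_subset_of_dist_succ_le (u := fun n => hpow f (-n) (ξ n)) hgU
      (hξ.dist_hpow_neg_succ_le hfδ) (by simpa [hpow_zero_apply, hξ₀] using hpU) n
  simpa [dist_comm, hpow_apply_hpow_neg] using hfβ _ _ (mem_ball.1 (hUβ hpull)).le n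

theorem stmt13 [CompactSpace X] (f : X ≃ₜ X) (h : EquicontinuousHomeo f) :
    {x | ShadowablePoint f x} = {p : X | connectedComponent p = {p}} :=
  Set.ext fun _ => ⟨fun hp => hp.connectedComponent_eq_singleton h,
    ShadowablePoint.of_connectedComponent_eq_singleton h⟩
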